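/- Let ζ_{i₁},…,ζ_{i_{n-1}}, ζ_j, ζ_k be distinct complex numbers with positive imaginary parts and u's unit vectors in ℂ^m; set d_{pq} = (i/(ζ_q-ζ_p*))⟨u_p,u_q⟩ and assume all relevant leading minors are nonzero. Define φ_{{S},p} by e^{-2φ_{{S},p}} = ∏_{s∈S}|(ζ_s-ζ_p)/(ζ_s-ζ_p*)|² · det[d on S∪{p}] / (d_{pp}·det[d on S]), for a finite index set S not containing p. Then the symmetry e^{-2(φ_{{i₁,…,i_{n-1},j},k} − φ_{{i₁,…,i_{n-1}},k})} = e^{-2(φ_{{i₁,…,i_{n-1},k},j} − φ_{{i₁,…,i_{n-1}},j})} holds, both sides being equal to |(ζ_j-ζ_k)/(ζ_j-ζ_k*)|² · det[d on {i₁,…,i_{n-1},j,k}]·det[d on {i₁,…,i_{n-1}}] / (det[d on {i₁,…,i_{n-1},j}]·det[d on {i₁,…,i_{n-1},k}]). -/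

import Mathlib

open Complex Matrix BigOperators

noncomputable section

/-- Hermitian inner product on ℂ^m, linear in the first slot. -/
def herm {m : ℕ} (u v : Fin m → ℂ) : ℂ := ∑ a, u a * (starRingEnd ℂ) (v a)

/-!
In the ratio defining either side, the product over `S` and the diagonal entry `d_pp` cancel,
leaving the single factor `|(ζ_j-ζ_k)/(ζ_j-ζ_k*)|²` split off from the product over `S ∪ {j}`
(resp. `|(ζ_k-ζ_j)/(ζ_k-ζ_j*)|²` from `S ∪ {k}`) times the same ratio of determinants. The two
factors agree because `ζ_k - ζ_j* = -conj (ζ_j - ζ_k*)`.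
-/

lemma sub_conj_ne_zero_of_im_pos {z w : ℂ} (hz : 0 < z.im) (hw : 0 < w.im) :
    z - (starRingEnd ℂ) w ≠ 0 := by
  intro h
  have := congrArg Complex.im h
  simp only [sub_im, conj_im, zero_im] at this
  linarith

lemma div_sub_conj_ne_zero {z w : ℂ} (hzw : z ≠ w) (hz : 0 < z.im) (hw : 0 < w.im) :
    (z - w) / (z - (starRingEnd ℂ) w) ≠ 0 :=
  div_ne_zero (sub_ne_zero.mpr hzw) (sub_conj_ne_zero_of_im_pos hz hw)

lemma norm_div_sub_conj_comm (z w : ℂ) :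
    ‖(z - w) / (z - (starRingEnd ℂ) w)‖ = ‖(w - z) / (w - (starRingEnd ℂ) z)‖ := by
  have hconj : (starRingEnd ℂ) (z - (starRingEnd ℂ) w) = -(w - (starRingEnd ℂ) z) := by
    simp only [map_sub, conj_conj]
    ring
  rw [norm_div, norm_div, ← norm_conj (z - (starRingEnd ℂ) w), hconj, norm_neg, norm_sub_rev]

lemma Fin.ofReal_prod_snoc_mul_div_div {N n : ℕ} (g : Fin N → ℝ) (f : Fin n → Fin N)
    (p : Fin N) {c D Dp Dq D₀ : ℂ} (hg : ∏ s, g (f s) ≠ 0) (hc : c ≠ 0) (hp : Dp ≠ 0)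
    (hq : Dq ≠ 0) (h₀ : D₀ ≠ 0) :
    ((∏ s : Fin (n+1), g (Fin.snoc (α := fun _ => Fin N) f p s) : ℝ) : ℂ) * D / (c * Dp) /
        (((∏ s, g (f s) : ℝ) : ℂ) * Dq / (c * D₀)) =
      (g p : ℂ) * D * D₀ / (Dp * Dq) := by
  have hg' : ((∏ s, g (f s) : ℝ) : ℂ) ≠ 0 := ofReal_ne_zero.mpr hg
  simp only [Fin.prod_univ_castSucc, Fin.snoc_castSucc, Fin.snoc_last, ofReal_mul]
  field_simp

theorem stmt18 {m n : ℕ} (ζ : Fin (n+2) → ℂ) (hinj : Function.Injective ζ)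
    (him : ∀ p, 0 < (ζ p).im)
    (u : Fin (n+2) → Fin m → ℂ) (hu : ∀ p, herm (u p) (u p) = 1) :
    -- indices: S = {i₁,…,iₙ} = {0,…,n-1}, j = n, k = n+1
    let jdx : Fin (n+2) := ⟨n, by omega⟩
    let kdx : Fin (n+2) := ⟨n+1, by omega⟩
    let e : Fin n → Fin (n+2) := Fin.castLE (by omega)
    let fj : Fin (n+1) → Fin (n+2) := Fin.snoc (Fin.castLE (by omega)) jdx
    let fk : Fin (n+1) → Fin (n+2) := Fin.snoc (Fin.castLE (by omega)) kdx
    let d : Matrix (Fin (n+2)) (Fin (n+2)) ℂ :=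
      fun p q => Complex.I / (ζ q - (starRingEnd ℂ) (ζ p)) * herm (u p) (u q)
    let DS : ℂ := (d.submatrix e e).det
    let DSj : ℂ := (d.submatrix fj fj).det
    let DSk : ℂ := (d.submatrix fk fk).det
    let DSjk : ℂ := d.det
    DS ≠ 0 → DSj ≠ 0 → DSk ≠ 0 →
    -- e^{-2φ_{{S},p}} = ∏_{s∈S}|(ζ_s-ζ_p)/(ζ_s-ζ_p*)|² · det[d on S∪{p}]/(d_pp·det[d on S])
    let X1 : ℂ :=
      (((∏ s : Fin (n+1), (norm ((ζ (fj s) - ζ kdx) /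
          (ζ (fj s) - (starRingEnd ℂ) (ζ kdx))))^2 : ℝ) : ℂ) *
        DSjk / (d kdx kdx * DSj)) /
      ((((∏ s : Fin n, (norm ((ζ (e s) - ζ kdx) /
          (ζ (e s) - (starRingEnd ℂ) (ζ kdx))))^2 : ℝ) : ℂ)) *
        DSk / (d kdx kdx * DS))
    let X2 : ℂ :=
      (((∏ s : Fin (n+1), (norm ((ζ (fk s) - ζ jdx) /
          (ζ (fk s) - (starRingEnd ℂ) (ζ jdx))))^2 : ℝ) : ℂ) *
        DSjk / (d jdx jdx * DSk)) /
      ((((∏ s : Fin n, (norm ((ζ (e s) - ζ jdx) /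
          (ζ (e s) - (starRingEnd ℂ) (ζ jdx))))^2 : ℝ) : ℂ)) *
        DSj / (d jdx jdx * DS))
    X1 = X2 ∧
      X1 = (((norm ((ζ jdx - ζ kdx) / (ζ jdx - (starRingEnd ℂ) (ζ kdx))))^2 : ℝ) : ℂ) *
        DSjk * DS / (DSj * DSk) := by
  intro jdx kdx e fj fk d DS DSj DSk DSjk hDS hDSj hDSk X1 X2
  have hdiag : ∀ p, d p p ≠ 0 := fun p => by
    simpa [d, hu] using sub_conj_ne_zero_of_im_pos (him p) (him p)
  have hprodS_ne_zero : ∀ p, (∀ s, e s ≠ p) →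
      ∏ s : Fin n, ‖(ζ (e s) - ζ p) / (ζ (e s) - (starRingEnd ℂ) (ζ p))‖ ^ 2 ≠ 0 :=
    fun p hp => Finset.prod_ne_zero_iff.mpr fun s _ => pow_ne_zero _ <|
      norm_ne_zero_iff.mpr <| div_sub_conj_ne_zero (hinj.ne (hp s)) (him _) (him _)
  have hSk : ∀ s, e s ≠ kdx := fun s h => by simp [Fin.ext_iff, e, kdx] at h; omega
  have hSj : ∀ s, e s ≠ jdx := fun s h => by simp [Fin.ext_iff, e, jdx] at h; omega
  have hX1 : X1 = (((norm ((ζ jdx - ζ kdx) / (ζ jdx - (starRingEnd ℂ) (ζ kdx))))^2 : ℝ) : ℂ) *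
      DSjk * DS / (DSj * DSk) :=
    Fin.ofReal_prod_snoc_mul_div_div
      (fun a => ‖(ζ a - ζ kdx) / (ζ a - (starRingEnd ℂ) (ζ kdx))‖ ^ 2) e jdx
      (hprodS_ne_zero kdx hSk) (hdiag kdx) hDSj hDSk hDS
  have hX2 : X2 = (((norm ((ζ kdx - ζ jdx) / (ζ kdx - (starRingEnd ℂ) (ζ jdx))))^2 : ℝ) : ℂ) *
      DSjk * DS / (DSk * DSj) :=
    Fin.ofReal_prod_snoc_mul_div_div
      (fun a => ‖(ζ a - ζ jdx) / (ζ a - (starRingEnd ℂ) (ζ jdx))‖ ^ 2) e kdx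
      (hprodS_ne_zero jdx hSj) (hdiag jdx) hDSk hDSj hDS
  refine ⟨?_, hX1⟩
  rw [hX1, hX2, norm_div_sub_conj_comm, mul_comm DSk]
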